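/- arXiv:1511.02067 — 17 statements merged into one kernel-verified Lean document; each statement's English description precedes it below -/
import Mathlib

section
/- Let a, b : ℕ → ℚ satisfy a(1)=b(1)=0 and for n ≥ 1: a(n+1)=a(n)+b(n)+3, b(n+1)=a(n)+2b(n). Then for all n ≥ 4, a(n) = 4a(n-1) - 4a(n-2) + a(n-3). -/
theorem stmt_1 (a b : ℕ → ℚ)
    (ha1 : a 1 = 0) (hb1 : b 1 = 0)
    (hra : ∀ n, 1 ≤ n → a (n + 1) = a n + b n + 3)
    (hrb : ∀ n, 1 ≤ n → b (n + 1) = a n + 2 * b n) :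
    ∀ n, 4 ≤ n → a n = 4 * a (n - 1) - 4 * a (n - 2) + a (n - 3) := by
  intro n hn
  obtain ⟨m, rfl⟩ : ∃ m, n = m + 4 := ⟨n - 4, by omega⟩
  have h1 : m + 4 - 1 = (m + 1) + 2 := by omega
  have h2 : m + 4 - 2 = (m + 1) + 1 := by omega
  have h3 : m + 4 - 3 = m + 1 := by omega
  rw [h1, h2, h3]
  have e1 := hra (m + 1) (by omega)
  have e2 := hrb (m + 1) (by omega)
  have e3 := hra (m + 1 + 1) (by omega)
  have e4 := hrb (m + 1 + 1) (by omega)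
  have e5 := hra (m + 1 + 1 + 1) (by omega)
  have : m + 4 = m + 1 + 1 + 1 + 1 := by omega
  rw [this, e5, e4, e3, e2, e1]
  ring
end

section
/- Let a, b : ℕ → ℚ satisfy a(1)=b(1)=0 and for n ≥ 1: a(n+1)=a(n)+b(n)+3, b(n+1)=a(n)+2b(n). Then for all n ≥ 4, b(n) = 4b(n-1) - 4b(n-2) + b(n-3). -/
theorem stmt_2 (a b : ℕ → ℚ)
    (ha1 : a 1 = 0) (hb1 : b 1 = 0)
    (hra : ∀ n, 1 ≤ n → a (n + 1) = a n + b n + 3)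
    (hrb : ∀ n, 1 ≤ n → b (n + 1) = a n + 2 * b n) :
    ∀ n, 4 ≤ n → b n = 4 * b (n - 1) - 4 * b (n - 2) + b (n - 3) := by
  have key : ∀ m, 1 ≤ m → b (m + 2) = 3 * b (m + 1) - b m + 3 := by
    intro m hm
    have h1 := hrb (m + 1) (by omega)
    have h2 := hra m hm
    have h3 := hrb m hm
    rw [h1, h2]
    linarith
  intro n hn
  obtain ⟨m, rfl⟩ : ∃ m, n = m + 4 := ⟨n - 4, by omega⟩
  have k1 := key (m + 1) (by omega)
  have k2 := key (m + 2) (by omega)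
  simp only [show m + 4 - 1 = m + 3 from rfl, show m + 4 - 2 = m + 2 from rfl,
    show m + 4 - 3 = m + 1 from rfl]
  have : m + 1 + 2 = m + 3 := rfl
  have : m + 2 + 2 = m + 4 := rfl
  linarith [key (m + 1) (by omega), key (m + 2) (by omega)]
end

section
/- Let a, b : ℕ → ℝ satisfy a(1)=b(1)=0 and for n ≥ 1: a(n+1)=a(n)+b(n)+3, b(n+1)=a(n)+2b(n). Let α₁=(3+√5)/2 and α₂=(3−√5)/2. Then for all n ≥ 1, a(n) = (−9/2 + (21/10)√5)·α₁ⁿ + (−9/2 − (21/10)√5)·α₂ⁿ + 3. -/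
theorem stmt_3 (a b : ℕ → ℝ)
    (ha1 : a 1 = 0) (hb1 : b 1 = 0)
    (hra : ∀ n, 1 ≤ n → a (n + 1) = a n + b n + 3)
    (hrb : ∀ n, 1 ≤ n → b (n + 1) = a n + 2 * b n) :
    ∀ n, 1 ≤ n →
      a n = (-9/2 + (21/10) * Real.sqrt 5) * ((3 + Real.sqrt 5)/2) ^ n
          + (-9/2 - (21/10) * Real.sqrt 5) * ((3 - Real.sqrt 5)/2) ^ n + 3 := by
  have hs : Real.sqrt 5 ^ 2 = 5 := Real.sq_sqrt (by norm_num)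
  set s := Real.sqrt 5 with hsdef
  have key : ∀ n, 1 ≤ n →
      a n = (-9/2 + (21/10) * s) * ((3 + s)/2) ^ n
          + (-9/2 - (21/10) * s) * ((3 - s)/2) ^ n + 3 ∧
      b n = (-9/2 + (21/10) * s) * ((1 + s)/2) * ((3 + s)/2) ^ n
          + (-9/2 - (21/10) * s) * ((1 - s)/2) * ((3 - s)/2) ^ n - 3 := by
    intro n hn
    induction n, hn using Nat.le_induction with
    | base =>
      constructor
      · rw [ha1]; linear_combination (-21/10) * hs
      · rw [hb1]; linear_combination (-39/20) * hs
    | succ n hn ih =>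
      obtain ⟨iha, ihb⟩ := ih
      constructor
      · rw [hra n hn, iha, ihb, pow_succ, pow_succ]; ring
      · rw [hrb n hn, iha, ihb, pow_succ, pow_succ]
        linear_combination (((-9/2 + (21/10) * s) * ((3 + s)/2) ^ n
          + (-9/2 - (21/10) * s) * ((3 - s)/2) ^ n)/4
          + (9/4 - (21/20) * s) * ((3 + s)/2) ^ n
          + (9/4 + (21/20) * s) * ((3 - s)/2) ^ n) * hs
  intro n hn
  exact (key n hn).1
end

section
/- Let a, b : ℕ → ℝ satisfy a(1)=b(1)=0 and for n ≥ 1: a(n+1)=a(n)+b(n)+3, b(n+1)=a(n)+2b(n). Let α₁=(3+√5)/2 and α₂=(3−√5)/2. Then for all n ≥ 1, b(n) = (3 − (6/5)√5)·α₁ⁿ + (3 + (6/5)√5)·α₂ⁿ − 3. -/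
theorem stmt_4 (a b : ℕ → ℝ)
    (ha1 : a 1 = 0) (hb1 : b 1 = 0)
    (hra : ∀ n, 1 ≤ n → a (n + 1) = a n + b n + 3)
    (hrb : ∀ n, 1 ≤ n → b (n + 1) = a n + 2 * b n) :
    ∀ n, 1 ≤ n →
      b n = (3 - (6/5) * Real.sqrt 5) * ((3 + Real.sqrt 5)/2) ^ n
          + (3 + (6/5) * Real.sqrt 5) * ((3 - Real.sqrt 5)/2) ^ n - 3 := by
  set s := Real.sqrt 5 with hs_def
  have hs : s ^ 2 = 5 := Real.sq_sqrt (by norm_num)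
  set α₁ : ℝ := (3 + s)/2 with hα₁
  set α₂ : ℝ := (3 - s)/2 with hα₂
  set c₁ : ℝ := 3 - (6/5) * s with hc₁
  set c₂ : ℝ := 3 + (6/5) * s with hc₂
  have h1 : α₁ ^ 2 = 3 * α₁ - 1 := by rw [hα₁]; linear_combination (1/4) * hs
  have h2 : α₂ ^ 2 = 3 * α₂ - 1 := by rw [hα₂]; linear_combination (1/4) * hs
  have key : ∀ n, 1 ≤ n →
      (a n = c₁ * (α₁ - 2) * α₁ ^ n + c₂ * (α₂ - 2) * α₂ ^ n + 3) ∧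
      (b n = c₁ * α₁ ^ n + c₂ * α₂ ^ n - 3) := by
    intro n hn
    induction n, hn using Nat.le_induction with
    | base =>
      constructor
      · rw [ha1, hα₁, hα₂, hc₁, hc₂]
        ring_nf
        linear_combination (-3/10) * hs
      · rw [hb1, hα₁, hα₂, hc₁, hc₂]
        ring_nf
        linear_combination (6/5) * hs
    | succ n hn ih =>
      obtain ⟨iha, ihb⟩ := ih
      constructor
      · rw [hra n hn, iha, ihb]
        linear_combination (c₁ * α₁ ^ n) * h1 + (c₂ * α₂ ^ n) * h2 + (((3/5)*s - 3/2) * α₁ ^ n + (-(3/5)*s - 3/2) * α₂ ^ n) * hs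
      · rw [hrb n hn, iha, ihb]
        ring
  intro n hn
  exact (key n hn).2
end

section
/- Let a, b, c, d, e : ℕ → ℚ satisfy a(1)=b(1)=c(1)=d(1)=e(1)=0 and for n ≥ 1: a(n+1)=a(n)+b(n)+3, b(n+1)=a(n)+2b(n), c(n+1)=(1/3)a(n)+c(n)+(2/3)d(n), d(n+1)=(1/2)b(n)+(3/2)c(n)+2d(n)+(5/2)e(n), e(n+1)=3c(n)+4d(n)+6e(n). Then for all n ≥ 6, c(n) = 12c(n-1) − 37c(n-2) + 37c(n-3) − 12c(n-4) + c(n-5). -/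
theorem stmt_5 (a b c d e : ℕ → ℚ)
    (ha1 : a 1 = 0) (hb1 : b 1 = 0) (hc1 : c 1 = 0) (hd1 : d 1 = 0) (he1 : e 1 = 0)
    (hra : ∀ n, 1 ≤ n → a (n + 1) = a n + b n + 3)
    (hrb : ∀ n, 1 ≤ n → b (n + 1) = a n + 2 * b n)
    (hrc : ∀ n, 1 ≤ n → c (n + 1) = (1/3) * a n + c n + (2/3) * d n)
    (hrd : ∀ n, 1 ≤ n → d (n + 1) = (1/2) * b n + (3/2) * c n + 2 * d n + (5/2) * e n)
    (hre : ∀ n, 1 ≤ n → e (n + 1) = 3 * c n + 4 * d n + 6 * e n)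
    :
    ∀ n, 6 ≤ n → c n = 12 * c (n-1) - 37 * c (n-2) + 37 * c (n-3) - 12 * c (n-4) + c (n-5) := by
  have key : ∀ m, 1 ≤ m → c (m+5) = 12 * c (m+4) - 37 * c (m+3) + 37 * c (m+2)
      - 12 * c (m+1) + c m := by
    intro m hm
    have h1 : 1 ≤ m + 1 := by omega
    have h2 : 1 ≤ m + 2 := by omega
    have h3 : 1 ≤ m + 3 := by omega
    have h4 : 1 ≤ m + 4 := by omega
    have ea0 := hra m hm; have eb0 := hrb m hm; have ec0 := hrc m hm
    have ed0 := hrd m hm; have ee0 := hre m hm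
    have ea1 := hra (m+1) h1; have eb1 := hrb (m+1) h1; have ec1 := hrc (m+1) h1
    have ed1 := hrd (m+1) h1; have ee1 := hre (m+1) h1
    have ea2 := hra (m+2) h2; have eb2 := hrb (m+2) h2; have ec2 := hrc (m+2) h2
    have ed2 := hrd (m+2) h2; have ee2 := hre (m+2) h2
    have ea3 := hra (m+3) h3; have eb3 := hrb (m+3) h3; have ec3 := hrc (m+3) h3
    have ed3 := hrd (m+3) h3; have ee3 := hre (m+3) h3
    have ec4 := hrc (m+4) h4
    simp only [show m+1+1 = m+2 from rfl, show m+2+1 = m+3 from rfl,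
      show m+3+1 = m+4 from rfl, show m+4+1 = m+5 from rfl] at *
    linarith
  intro n hn
  obtain ⟨m, rfl⟩ : ∃ m, n = m + 5 := ⟨n - 5, by omega⟩
  have hm : 1 ≤ m := by omega
  have := key m hm
  simp only [show m+5-1 = m+4 from rfl, show m+5-2 = m+3 from rfl,
    show m+5-3 = m+2 from rfl, show m+5-4 = m+1 from rfl, show m+5-5 = m from rfl]
  exact this
end

section
/- Let a, b, c, d, e : ℕ → ℚ satisfy the system a(n+1)=a(n)+b(n)+3, b(n+1)=a(n)+2b(n), c(n+1)=(1/3)a(n)+c(n)+(2/3)d(n), d(n+1)=(1/2)b(n)+(3/2)c(n)+2d(n)+(5/2)e(n), e(n+1)=3c(n)+4d(n)+6e(n) for n ≥ 1, with all values 0 at n=1. Then for all n ≥ 6, d(n) = 12d(n-1) − 37d(n-2) + 37d(n-3) − 12d(n-4) + d(n-5), and e(n) = 12e(n-1) − 37e(n-2) + 37e(n-3) − 12e(n-4) + e(n-5). -/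
theorem stmt_6 (a b c d e : ℕ → ℚ)
    (ha1 : a 1 = 0) (hb1 : b 1 = 0) (hc1 : c 1 = 0) (hd1 : d 1 = 0) (he1 : e 1 = 0)
    (hra : ∀ n, 1 ≤ n → a (n + 1) = a n + b n + 3)
    (hrb : ∀ n, 1 ≤ n → b (n + 1) = a n + 2 * b n)
    (hrc : ∀ n, 1 ≤ n → c (n + 1) = (1/3) * a n + c n + (2/3) * d n)
    (hrd : ∀ n, 1 ≤ n → d (n + 1) = (1/2) * b n + (3/2) * c n + 2 * d n + (5/2) * e n)
    (hre : ∀ n, 1 ≤ n → e (n + 1) = 3 * c n + 4 * d n + 6 * e n)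
    :
    ∀ n, 6 ≤ n →
      (d n = 12 * d (n-1) - 37 * d (n-2) + 37 * d (n-3) - 12 * d (n-4) + d (n-5)) ∧
      (e n = 12 * e (n-1) - 37 * e (n-2) + 37 * e (n-3) - 12 * e (n-4) + e (n-5)) := by
  have A2 : a 2 = 3 := by rw [show (2:ℕ) = 1+1 from rfl, hra 1 le_rfl, ha1, hb1]; norm_num
  have B2 : b 2 = 0 := by rw [show (2:ℕ) = 1+1 from rfl, hrb 1 le_rfl, ha1, hb1]; norm_num
  have C2 : c 2 = 0 := by rw [show (2:ℕ) = 1+1 from rfl, hrc 1 le_rfl, ha1, hc1, hd1]; norm_num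
  have D2 : d 2 = 0 := by rw [show (2:ℕ) = 1+1 from rfl, hrd 1 le_rfl, hb1, hc1, hd1, he1]; norm_num
  have E2 : e 2 = 0 := by rw [show (2:ℕ) = 1+1 from rfl, hre 1 le_rfl, hc1, hd1, he1]; norm_num
  have A3 : a 3 = 6 := by rw [show (3:ℕ) = 2+1 from rfl, hra 2 (by norm_num), A2, B2]; norm_num
  have B3 : b 3 = 3 := by rw [show (3:ℕ) = 2+1 from rfl, hrb 2 (by norm_num), A2, B2]; norm_num
  have C3 : c 3 = 1 := by rw [show (3:ℕ) = 2+1 from rfl, hrc 2 (by norm_num), A2, C2, D2]; norm_num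
  have D3 : d 3 = 0 := by rw [show (3:ℕ) = 2+1 from rfl, hrd 2 (by norm_num), B2, C2, D2, E2]; norm_num
  have E3 : e 3 = 0 := by rw [show (3:ℕ) = 2+1 from rfl, hre 2 (by norm_num), C2, D2, E2]; norm_num
  have A4 : a 4 = 12 := by rw [show (4:ℕ) = 3+1 from rfl, hra 3 (by norm_num), A3, B3]; norm_num
  have B4 : b 4 = 12 := by rw [show (4:ℕ) = 3+1 from rfl, hrb 3 (by norm_num), A3, B3]; norm_num
  have C4 : c 4 = 3 := by rw [show (4:ℕ) = 3+1 from rfl, hrc 3 (by norm_num), A3, C3, D3]; norm_num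
  have D4 : d 4 = 3 := by rw [show (4:ℕ) = 3+1 from rfl, hrd 3 (by norm_num), B3, C3, D3, E3]; norm_num
  have E4 : e 4 = 3 := by rw [show (4:ℕ) = 3+1 from rfl, hre 3 (by norm_num), C3, D3, E3]; norm_num
  have A5 : a 5 = 27 := by rw [show (5:ℕ) = 4+1 from rfl, hra 4 (by norm_num), A4, B4]; norm_num
  have B5 : b 5 = 36 := by rw [show (5:ℕ) = 4+1 from rfl, hrb 4 (by norm_num), A4, B4]; norm_num
  have C5 : c 5 = 9 := by rw [show (5:ℕ) = 4+1 from rfl, hrc 4 (by norm_num), A4, C4, D4]; norm_num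
  have D5 : d 5 = 24 := by rw [show (5:ℕ) = 4+1 from rfl, hrd 4 (by norm_num), B4, C4, D4, E4]; norm_num
  have E5 : e 5 = 39 := by rw [show (5:ℕ) = 4+1 from rfl, hre 4 (by norm_num), C4, D4, E4]; norm_num
  have A6 : a 6 = 66 := by rw [show (6:ℕ) = 5+1 from rfl, hra 5 (by norm_num), A5, B5]; norm_num
  have B6 : b 6 = 99 := by rw [show (6:ℕ) = 5+1 from rfl, hrb 5 (by norm_num), A5, B5]; norm_num
  have C6 : c 6 = 34 := by rw [show (6:ℕ) = 5+1 from rfl, hrc 5 (by norm_num), A5, C5, D5]; norm_num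
  have D6 : d 6 = 177 := by rw [show (6:ℕ) = 5+1 from rfl, hrd 5 (by norm_num), B5, C5, D5, E5]; norm_num
  have E6 : e 6 = 357 := by rw [show (6:ℕ) = 5+1 from rfl, hre 5 (by norm_num), C5, D5, E5]; norm_num
  have key : ∀ n, 1 ≤ n →
      (a (n+5) - 12*a (n+4) + 37*a (n+3) - 37*a (n+2) + 12*a (n+1) - a n = 0) ∧
      (b (n+5) - 12*b (n+4) + 37*b (n+3) - 37*b (n+2) + 12*b (n+1) - b n = 0) ∧
      (c (n+5) - 12*c (n+4) + 37*c (n+3) - 37*c (n+2) + 12*c (n+1) - c n = 0) ∧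
      (d (n+5) - 12*d (n+4) + 37*d (n+3) - 37*d (n+2) + 12*d (n+1) - d n = 0) ∧
      (e (n+5) - 12*e (n+4) + 37*e (n+3) - 37*e (n+2) + 12*e (n+1) - e n = 0) := by
    intro n hn
    induction n with
    | zero => omega
    | succ m ih =>
      rcases Nat.lt_or_ge m 1 with hm | hm
      · interval_cases m
        refine ⟨?_, ?_, ?_, ?_, ?_⟩ <;>
          norm_num [ha1, hb1, hc1, hd1, he1, A2, B2, C2, D2, E2, A3, B3, C3, D3, E3,
            A4, B4, C4, D4, E4, A5, B5, C5, D5, E5, A6, B6, C6, D6, E6]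
      · obtain ⟨Ga, Gb, Gc, Gd, Ge⟩ := ih hm
        have ra0 := hra m hm; have ra1 := hra (m+1) (by omega); have ra2 := hra (m+2) (by omega)
        have ra3 := hra (m+3) (by omega); have ra4 := hra (m+4) (by omega)
        have ra5 := hra (m+5) (by omega)
        have rb0 := hrb m hm; have rb1 := hrb (m+1) (by omega); have rb2 := hrb (m+2) (by omega)
        have rb3 := hrb (m+3) (by omega); have rb4 := hrb (m+4) (by omega)
        have rb5 := hrb (m+5) (by omega)
        have rc0 := hrc m hm; have rc1 := hrc (m+1) (by omega); have rc2 := hrc (m+2) (by omega)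
        have rc3 := hrc (m+3) (by omega); have rc4 := hrc (m+4) (by omega)
        have rc5 := hrc (m+5) (by omega)
        have rd0 := hrd m hm; have rd1 := hrd (m+1) (by omega); have rd2 := hrd (m+2) (by omega)
        have rd3 := hrd (m+3) (by omega); have rd4 := hrd (m+4) (by omega)
        have rd5 := hrd (m+5) (by omega)
        have re0 := hre m hm; have re1 := hre (m+1) (by omega); have re2 := hre (m+2) (by omega)
        have re3 := hre (m+3) (by omega); have re4 := hre (m+4) (by omega)
        have re5 := hre (m+5) (by omega)
        simp only [show m+1+1 = m+2 from rfl, show m+2+1 = m+3 from rfl,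
          show m+3+1 = m+4 from rfl, show m+4+1 = m+5 from rfl,
          show m+5+1 = m+6 from rfl, show m+1+2 = m+3 from rfl,
          show m+1+3 = m+4 from rfl, show m+1+4 = m+5 from rfl,
          show m+1+5 = m+6 from rfl] at *
        refine ⟨?_, ?_, ?_, ?_, ?_⟩
        · linear_combination ra5 - 12*ra4 + 37*ra3 - 37*ra2 + 12*ra1 - ra0 + Ga + Gb
        · linear_combination rb5 - 12*rb4 + 37*rb3 - 37*rb2 + 12*rb1 - rb0 + Ga + 2*Gb
        · linear_combination rc5 - 12*rc4 + 37*rc3 - 37*rc2 + 12*rc1 - rc0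
            + (1/3)*Ga + Gc + (2/3)*Gd
        · linear_combination rd5 - 12*rd4 + 37*rd3 - 37*rd2 + 12*rd1 - rd0
            + (1/2)*Gb + (3/2)*Gc + 2*Gd + (5/2)*Ge
        · linear_combination re5 - 12*re4 + 37*re3 - 37*re2 + 12*re1 - re0
            + 3*Gc + 4*Gd + 6*Ge
  intro n hn
  obtain ⟨m, rfl⟩ : ∃ m, n = m + 6 := ⟨n - 6, by omega⟩
  obtain ⟨-, -, -, Gd, Ge⟩ := key (m+1) (by omega)
  simp only [show m+1+1 = m+2 from rfl, show m+1+2 = m+3 from rfl,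
    show m+1+3 = m+4 from rfl, show m+1+4 = m+5 from rfl,
    show m+1+5 = m+6 from rfl] at Gd Ge
  simp only [show m+6-1 = m+5 from rfl, show m+6-2 = m+4 from rfl,
    show m+6-3 = m+3 from rfl, show m+6-4 = m+2 from rfl,
    show m+6-5 = m+1 from rfl]
  exact ⟨by linarith, by linarith⟩
end

section
/- Define s : ℕ → ℚ by s(0)=1 and s(n) = a(n)+b(n)+c(n)+d(n)+e(n)+3 for n ≥ 1, where a,b,c,d,e satisfy the system a(n+1)=a(n)+b(n)+3, b(n+1)=a(n)+2b(n), c(n+1)=(1/3)a(n)+c(n)+(2/3)d(n), d(n+1)=(1/2)b(n)+(3/2)c(n)+2d(n)+(5/2)e(n), e(n+1)=3c(n)+4d(n)+6e(n) for n ≥ 1 with all values 0 at n=1. Then for all n ≥ 6, s(n) = 12s(n-1) − 37s(n-2) + 37s(n-3) − 12s(n-4) + s(n-5). -/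
theorem stmt_7 (a b c d e s : ℕ → ℚ)
    (ha1 : a 1 = 0) (hb1 : b 1 = 0) (hc1 : c 1 = 0) (hd1 : d 1 = 0) (he1 : e 1 = 0)
    (hra : ∀ n, 1 ≤ n → a (n + 1) = a n + b n + 3)
    (hrb : ∀ n, 1 ≤ n → b (n + 1) = a n + 2 * b n)
    (hrc : ∀ n, 1 ≤ n → c (n + 1) = (1/3) * a n + c n + (2/3) * d n)
    (hrd : ∀ n, 1 ≤ n → d (n + 1) = (1/2) * b n + (3/2) * c n + 2 * d n + (5/2) * e n)
    (hre : ∀ n, 1 ≤ n → e (n + 1) = 3 * c n + 4 * d n + 6 * e n)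
    (hs0 : s 0 = 1)
    (hs : ∀ n, 1 ≤ n → s n = a n + b n + c n + d n + e n + 3) :
    ∀ n, 6 ≤ n → s n = 12 * s (n-1) - 37 * s (n-2) + 37 * s (n-3) - 12 * s (n-4) + s (n-5) := by
  have key : ∀ m, 1 ≤ m → s (m + 5) = 12 * s (m+4) - 37 * s (m+3) + 37 * s (m+2) - 12 * s (m+1) + s m := by
    intro m hm
    have h1 : (1:ℕ) ≤ m + 1 := by omega
    have h2 : (1:ℕ) ≤ m + 2 := by omega
    have h3 : (1:ℕ) ≤ m + 3 := by omega
    have h4 : (1:ℕ) ≤ m + 4 := by omega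
    have h5 : (1:ℕ) ≤ m + 5 := by omega
    rw [hs (m+5) h5, hs (m+4) h4, hs (m+3) h3, hs (m+2) h2, hs (m+1) h1, hs m hm]
    rw [show (m+5) = (m+4)+1 from rfl] at *
    rw [hra (m+4) h4, hrb (m+4) h4, hrc (m+4) h4, hrd (m+4) h4, hre (m+4) h4]
    rw [show (m+4) = (m+3)+1 from rfl] at *
    rw [hra (m+3) h3, hrb (m+3) h3, hrc (m+3) h3, hrd (m+3) h3, hre (m+3) h3]
    rw [show (m+3) = (m+2)+1 from rfl] at *
    rw [hra (m+2) h2, hrb (m+2) h2, hrc (m+2) h2, hrd (m+2) h2, hre (m+2) h2]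
    rw [show (m+2) = (m+1)+1 from rfl] at *
    rw [hra (m+1) h1, hrb (m+1) h1, hrc (m+1) h1, hrd (m+1) h1, hre (m+1) h1]
    rw [show (m+1) = (m)+1 from rfl] at *
    rw [hra (m) hm, hrb (m) hm, hrc (m) hm, hrd (m) hm, hre (m) hm]
    ring
  intro n hn
  obtain ⟨m, hm, rfl⟩ : ∃ m, 1 ≤ m ∧ n = m + 5 := ⟨n - 5, by omega, by omega⟩
  have e1 : m + 5 - 1 = m + 4 := by omega
  have e2 : m + 5 - 2 = m + 3 := by omega
  have e3 : m + 5 - 3 = m + 2 := by omega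
  have e4 : m + 5 - 4 = m + 1 := by omega
  have e5 : m + 5 - 5 = m := by omega
  rw [e1, e2, e3, e4, e5]
  exact key m hm
end

section
/- Let s : ℕ → ℝ be defined via s(0)=1 and s(n)=a(n)+b(n)+c(n)+d(n)+e(n)+3 for n ≥ 1, with a,b,c,d,e satisfying the system a(n+1)=a(n)+b(n)+3, b(n+1)=a(n)+2b(n), c(n+1)=(1/3)a(n)+c(n)+(2/3)d(n), d(n+1)=(1/2)b(n)+(3/2)c(n)+2d(n)+(5/2)e(n), e(n+1)=3c(n)+4d(n)+6e(n) (n ≥ 1), zero at n=1. With α₁=(3+√5)/2, α₂=(3−√5)/2, α₃=4+√15, α₄=4−√15, for all n ≥ 1: s(n) = (−3/2 + (9/10)√5)α₁ⁿ + (−3/2 − (9/10)√5)α₂ⁿ + (7/12 − (3/20)√15)α₃ⁿ + (7/12 + (3/20)√15)α₄ⁿ + 17/6. -/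
theorem stmt_8 (a b c d e s : ℕ → ℝ)
    (ha1 : a 1 = 0) (hb1 : b 1 = 0) (hc1 : c 1 = 0) (hd1 : d 1 = 0) (he1 : e 1 = 0)
    (hra : ∀ n, 1 ≤ n → a (n + 1) = a n + b n + 3)
    (hrb : ∀ n, 1 ≤ n → b (n + 1) = a n + 2 * b n)
    (hrc : ∀ n, 1 ≤ n → c (n + 1) = (1/3) * a n + c n + (2/3) * d n)
    (hrd : ∀ n, 1 ≤ n → d (n + 1) = (1/2) * b n + (3/2) * c n + 2 * d n + (5/2) * e n)
    (hre : ∀ n, 1 ≤ n → e (n + 1) = 3 * c n + 4 * d n + 6 * e n)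
    (hs0 : s 0 = 1)
    (hs : ∀ n, 1 ≤ n → s n = a n + b n + c n + d n + e n + 3) :
    ∀ n, 1 ≤ n →
      s n = (-3/2 + (9/10) * Real.sqrt 5) * ((3 + Real.sqrt 5)/2) ^ n
          + (-3/2 - (9/10) * Real.sqrt 5) * ((3 - Real.sqrt 5)/2) ^ n
          + (7/12 - (3/20) * Real.sqrt 15) * (4 + Real.sqrt 15) ^ n
          + (7/12 + (3/20) * Real.sqrt 15) * (4 - Real.sqrt 15) ^ n + 17/6 := by
  have h5 : Real.sqrt 5 * Real.sqrt 5 = 5 := Real.mul_self_sqrt (by norm_num)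
  have h15 : Real.sqrt 15 * Real.sqrt 15 = 15 := Real.mul_self_sqrt (by norm_num)
  have key : ∀ n, 1 ≤ n →
      (a n = (-9/2 + (21/10) * Real.sqrt 5) * ((3 + Real.sqrt 5)/2) ^ n
           + (-9/2 - (21/10) * Real.sqrt 5) * ((3 - Real.sqrt 5)/2) ^ n + 3
     ∧ b n = (3 - (6/5) * Real.sqrt 5) * ((3 + Real.sqrt 5)/2) ^ n
           + (3 + (6/5) * Real.sqrt 5) * ((3 - Real.sqrt 5)/2) ^ n - 3
     ∧ c n = (-33/10 + (3/2) * Real.sqrt 5) * ((3 + Real.sqrt 5)/2) ^ n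
           + (-33/10 - (3/2) * Real.sqrt 5) * ((3 - Real.sqrt 5)/2) ^ n
           + (122/15 - (21/10) * Real.sqrt 15) * (4 + Real.sqrt 15) ^ n
           + (122/15 + (21/10) * Real.sqrt 15) * (4 - Real.sqrt 15) ^ n + 1/3
     ∧ d n = (27/5 - (12/5) * Real.sqrt 5) * ((3 + Real.sqrt 5)/2) ^ n
           + (27/5 + (12/5) * Real.sqrt 5) * ((3 - Real.sqrt 5)/2) ^ n
           + (-213/20 + (11/4) * Real.sqrt 15) * (4 + Real.sqrt 15) ^ n
           + (-213/20 - (11/4) * Real.sqrt 15) * (4 - Real.sqrt 15) ^ n - 3/2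
     ∧ e n = (-21/10 + (9/10) * Real.sqrt 5) * ((3 + Real.sqrt 5)/2) ^ n
           + (-21/10 - (9/10) * Real.sqrt 5) * ((3 - Real.sqrt 5)/2) ^ n
           + (31/10 - (4/5) * Real.sqrt 15) * (4 + Real.sqrt 15) ^ n
           + (31/10 + (4/5) * Real.sqrt 15) * (4 - Real.sqrt 15) ^ n + 1) := by
    intro n hn
    induction n, hn using Nat.le_induction with
    | base =>
      rw [ha1, hb1, hc1, hd1, he1]
      refine ⟨?_, ?_, ?_, ?_, ?_⟩
      · linear_combination ((-21/10):ℝ) * h5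
      · linear_combination ((6/5):ℝ) * h5
      · linear_combination ((-3/2):ℝ) * h5 + ((21/5):ℝ) * h15
      · linear_combination ((12/5):ℝ) * h5 + ((-11/2):ℝ) * h15
      · linear_combination ((-9/10):ℝ) * h5 + ((8/5):ℝ) * h15
    | succ n hn ih =>
      obtain ⟨iha, ihb, ihc, ihd, ihe⟩ := ih
      refine ⟨?_, ?_, ?_, ?_, ?_⟩
      · rw [hra n hn, iha, ihb]
        linear_combination (-(21/20)*(((3-Real.sqrt 5)/2)^n) + -(21/20)*(((3+Real.sqrt 5)/2)^n)) * h5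
      · rw [hrb n hn, iha, ihb]
        linear_combination ((3/5)*(((3-Real.sqrt 5)/2)^n) + (3/5)*(((3+Real.sqrt 5)/2)^n)) * h5
      · rw [hrc n hn, iha, ihc, ihd]
        linear_combination (-(3/4)*(((3-Real.sqrt 5)/2)^n) + -(3/4)*(((3+Real.sqrt 5)/2)^n)) * h5
          + ((21/10)*((4-Real.sqrt 15)^n) + (21/10)*((4+Real.sqrt 15)^n)) * h15
      · rw [hrd n hn, ihb, ihc, ihd, ihe]
        linear_combination ((6/5)*(((3-Real.sqrt 5)/2)^n) + (6/5)*(((3+Real.sqrt 5)/2)^n)) * h5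
          + (-(11/4)*((4-Real.sqrt 15)^n) + -(11/4)*((4+Real.sqrt 15)^n)) * h15
      · rw [hre n hn, ihc, ihd, ihe]
        linear_combination (-(9/20)*(((3-Real.sqrt 5)/2)^n) + -(9/20)*(((3+Real.sqrt 5)/2)^n)) * h5
          + ((4/5)*((4-Real.sqrt 15)^n) + (4/5)*((4+Real.sqrt 15)^n)) * h15
  intro n hn
  obtain ⟨Ha, Hb, Hc, Hd, He⟩ := key n hn
  rw [hs n hn, Ha, Hb, Hc, Hd, He]
  ring
end

section
/- Let c, d, e be as in the system (with a, b): a(n+1)=a(n)+b(n)+3, b(n+1)=a(n)+2b(n), c(n+1)=(1/3)a(n)+c(n)+(2/3)d(n), d(n+1)=(1/2)b(n)+(3/2)c(n)+2d(n)+(5/2)e(n), e(n+1)=3c(n)+4d(n)+6e(n) for n ≥ 1, all zero at n=1. With α₁=(3+√5)/2, α₂=(3−√5)/2, α₃=4+√15, α₄=4−√15, for all n ≥ 1: e(n) = (−21/10 + (9/10)√5)α₁ⁿ + (−21/10 − (9/10)√5)α₂ⁿ + (31/10 − (4/5)√15)α₃ⁿ + (31/10 + (4/5)√15)α₄ⁿ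 + 1. -/
theorem stmt_9 (a b c d e : ℕ → ℝ)
    (ha1 : a 1 = 0) (hb1 : b 1 = 0) (hc1 : c 1 = 0) (hd1 : d 1 = 0) (he1 : e 1 = 0)
    (hra : ∀ n, 1 ≤ n → a (n + 1) = a n + b n + 3)
    (hrb : ∀ n, 1 ≤ n → b (n + 1) = a n + 2 * b n)
    (hrc : ∀ n, 1 ≤ n → c (n + 1) = (1/3) * a n + c n + (2/3) * d n)
    (hrd : ∀ n, 1 ≤ n → d (n + 1) = (1/2) * b n + (3/2) * c n + 2 * d n + (5/2) * e n)
    (hre : ∀ n, 1 ≤ n → e (n + 1) = 3 * c n + 4 * d n + 6 * e n)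
    :
    ∀ n, 1 ≤ n →
      e n = (-21/10 + (9/10) * Real.sqrt 5) * ((3 + Real.sqrt 5)/2) ^ n
          + (-21/10 - (9/10) * Real.sqrt 5) * ((3 - Real.sqrt 5)/2) ^ n
          + (31/10 - (4/5) * Real.sqrt 15) * (4 + Real.sqrt 15) ^ n
          + (31/10 + (4/5) * Real.sqrt 15) * (4 - Real.sqrt 15) ^ n + 1 := by
  have h5 : Real.sqrt 5 ^ 2 = 5 := Real.sq_sqrt (by norm_num)
  have h15 : Real.sqrt 15 ^ 2 = 15 := Real.sq_sqrt (by norm_num)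
  set s5 := Real.sqrt 5 with hs5
  set s15 := Real.sqrt 15 with hs15
  have key : ∀ n, 1 ≤ n →
      (a n = (-9/2 + 21/10*s5)*((3+s5)/2)^n + (-9/2 - 21/10*s5)*((3-s5)/2)^n + 3 ∧
       b n = (3 - 6/5*s5)*((3+s5)/2)^n + (3 + 6/5*s5)*((3-s5)/2)^n - 3 ∧
       c n = (-33/10 + 3/2*s5)*((3+s5)/2)^n + (-33/10 - 3/2*s5)*((3-s5)/2)^n
           + (122/15 - 21/10*s15)*(4+s15)^n + (122/15 + 21/10*s15)*(4-s15)^n + 1/3 ∧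
       d n = (27/5 - 12/5*s5)*((3+s5)/2)^n + (27/5 + 12/5*s5)*((3-s5)/2)^n
           + (-213/20 + 11/4*s15)*(4+s15)^n + (-213/20 - 11/4*s15)*(4-s15)^n - 3/2 ∧
       e n = (-21/10 + 9/10*s5)*((3+s5)/2)^n + (-21/10 - 9/10*s5)*((3-s5)/2)^n
           + (31/10 - 4/5*s15)*(4+s15)^n + (31/10 + 4/5*s15)*(4-s15)^n + 1) := by
    intro n hn
    induction n, hn using Nat.le_induction with
    | base =>
      refine ⟨?_, ?_, ?_, ?_, ?_⟩
      · rw [ha1]; linear_combination (-21/10 : ℝ) * h5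
      · rw [hb1]; linear_combination (6/5 : ℝ) * h5
      · rw [hc1]; linear_combination (-3/2 : ℝ) * h5 + (21/5 : ℝ) * h15
      · rw [hd1]; linear_combination (12/5 : ℝ) * h5 + (-11/2 : ℝ) * h15
      · rw [he1]; linear_combination (-9/10 : ℝ) * h5 + (8/5 : ℝ) * h15
    | succ n hn ih =>
      obtain ⟨iha, ihb, ihc, ihd, ihe⟩ := ih
      refine ⟨?_, ?_, ?_, ?_, ?_⟩
      · rw [hra n hn, iha, ihb]
        linear_combination (-21/20 * (((3+s5)/2)^n + ((3-s5)/2)^n)) * h5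
      · rw [hrb n hn, iha, ihb]
        linear_combination (3/5 * (((3+s5)/2)^n + ((3-s5)/2)^n)) * h5
      · rw [hrc n hn, iha, ihc, ihd]
        linear_combination (-3/4 * (((3+s5)/2)^n + ((3-s5)/2)^n)) * h5
          + (21/10 * ((4+s15)^n + (4-s15)^n)) * h15
      · rw [hrd n hn, ihb, ihc, ihd, ihe]
        linear_combination (6/5 * (((3+s5)/2)^n + ((3-s5)/2)^n)) * h5
          + (-11/4 * ((4+s15)^n + (4-s15)^n)) * h15
      · rw [hre n hn, ihc, ihd, ihe]
        linear_combination (-9/20 * (((3+s5)/2)^n + ((3-s5)/2)^n)) * h5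
          + (4/5 * ((4+s15)^n + (4-s15)^n)) * h15
  intro n hn
  linear_combination (key n hn).2.2.2.2
end

section
/- Let c, d be as in the system a(n+1)=a(n)+b(n)+3, b(n+1)=a(n)+2b(n), c(n+1)=(1/3)a(n)+c(n)+(2/3)d(n), d(n+1)=(1/2)b(n)+(3/2)c(n)+2d(n)+(5/2)e(n), e(n+1)=3c(n)+4d(n)+6e(n) for n ≥ 1, all zero at n=1. With α₁=(3+√5)/2, α₂=(3−√5)/2, α₃=4+√15, α₄=4−√15, for all n ≥ 1: c(n) = (−33/10 + (3/2)√5)α₁ⁿ + (−33/10 − (3/2)√5)α₂ⁿ + (122/15 − (21/10)√15)α₃ⁿ + (122/15 + (21/10)√15)α₄ⁿ + 1/3. -/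
theorem stmt_10 (a b c d e : ℕ → ℝ)
    (ha1 : a 1 = 0) (hb1 : b 1 = 0) (hc1 : c 1 = 0) (hd1 : d 1 = 0) (he1 : e 1 = 0)
    (hra : ∀ n, 1 ≤ n → a (n + 1) = a n + b n + 3)
    (hrb : ∀ n, 1 ≤ n → b (n + 1) = a n + 2 * b n)
    (hrc : ∀ n, 1 ≤ n → c (n + 1) = (1/3) * a n + c n + (2/3) * d n)
    (hrd : ∀ n, 1 ≤ n → d (n + 1) = (1/2) * b n + (3/2) * c n + 2 * d n + (5/2) * e n)
    (hre : ∀ n, 1 ≤ n → e (n + 1) = 3 * c n + 4 * d n + 6 * e n)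
    :
    ∀ n, 1 ≤ n →
      c n = (-33/10 + (3/2) * Real.sqrt 5) * ((3 + Real.sqrt 5)/2) ^ n
          + (-33/10 - (3/2) * Real.sqrt 5) * ((3 - Real.sqrt 5)/2) ^ n
          + (122/15 - (21/10) * Real.sqrt 15) * (4 + Real.sqrt 15) ^ n
          + (122/15 + (21/10) * Real.sqrt 15) * (4 - Real.sqrt 15) ^ n + 1/3 := by
  set s := Real.sqrt 5 with hsdef
  set t := Real.sqrt 15 with htdef
  have hs : s ^ 2 = 5 := Real.sq_sqrt (by norm_num)
  have ht : t ^ 2 = 15 := Real.sq_sqrt (by norm_num)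
  have key : ∀ n, 1 ≤ n →
      a n = (-9/2 + 21/10*s)*((3+s)/2)^n + (-9/2 - 21/10*s)*((3-s)/2)^n + 3
    ∧ b n = (3 - 6/5*s)*((3+s)/2)^n + (3 + 6/5*s)*((3-s)/2)^n - 3
    ∧ c n = (-33/10 + (3/2)*s)*((3+s)/2)^n + (-33/10 - (3/2)*s)*((3-s)/2)^n
          + (122/15 - (21/10)*t)*(4+t)^n + (122/15 + (21/10)*t)*(4-t)^n + 1/3
    ∧ d n = (27/5 - 12/5*s)*((3+s)/2)^n + (27/5 + 12/5*s)*((3-s)/2)^n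
          + (-213/20 + 11/4*t)*(4+t)^n + (-213/20 - 11/4*t)*(4-t)^n - 3/2
    ∧ e n = (-21/10 + 9/10*s)*((3+s)/2)^n + (-21/10 - 9/10*s)*((3-s)/2)^n
          + (31/10 - 4/5*t)*(4+t)^n + (31/10 + 4/5*t)*(4-t)^n + 1 := by
    intro n hn
    induction n with
    | zero => omega
    | succ m ih =>
      rcases Nat.lt_or_ge 1 (m + 1) with h1 | h1
      · have hm : 1 ≤ m := by omega
        obtain ⟨ha', hb', hc', hd', he'⟩ := ih hm
        refine ⟨?_, ?_, ?_, ?_, ?_⟩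
        · rw [hra m hm, ha', hb']
          simp only [pow_succ]
          linear_combination (-(21/20)*(((3+s)/2)^m + ((3-s)/2)^m))*hs
        · rw [hrb m hm, ha', hb']
          simp only [pow_succ]
          linear_combination ((3/5)*(((3+s)/2)^m + ((3-s)/2)^m))*hs
        · rw [hrc m hm, ha', hc', hd']
          simp only [pow_succ]
          linear_combination (-(3/4)*(((3+s)/2)^m + ((3-s)/2)^m))*hs
            + ((21/10)*((4+t)^m + (4-t)^m))*ht
        · rw [hrd m hm, hb', hc', hd', he']
          simp only [pow_succ]
          linear_combination ((6/5)*(((3+s)/2)^m + ((3-s)/2)^m))*hs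
            + (-(11/4)*((4+t)^m + (4-t)^m))*ht
        · rw [hre m hm, hc', hd', he']
          simp only [pow_succ]
          linear_combination (-(9/20)*(((3+s)/2)^m + ((3-s)/2)^m))*hs
            + ((4/5)*((4+t)^m + (4-t)^m))*ht
      · have hm1 : m + 1 = 1 := by omega
        rw [hm1]
        simp only [pow_one]
        refine ⟨?_, ?_, ?_, ?_, ?_⟩
        · rw [ha1]; linear_combination (-(21/10))*hs
        · rw [hb1]; linear_combination ((6/5))*hs
        · rw [hc1]; linear_combination (-(3/2))*hs + ((21/5))*ht
        · rw [hd1]; linear_combination ((12/5))*hs + (-(11/2))*ht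
        · rw [he1]; linear_combination (-(9/10))*hs + ((8/5))*ht
  intro n hn
  exact (key n hn).2.2.1
end

section
/- Let d be as in the system a(n+1)=a(n)+b(n)+3, b(n+1)=a(n)+2b(n), c(n+1)=(1/3)a(n)+c(n)+(2/3)d(n), d(n+1)=(1/2)b(n)+(3/2)c(n)+2d(n)+(5/2)e(n), e(n+1)=3c(n)+4d(n)+6e(n) for n ≥ 1, all zero at n=1. With α₁=(3+√5)/2, α₂=(3−√5)/2, α₃=4+√15, α₄=4−√15, for all n ≥ 1: d(n) = (27/5 − (12/5)√5)α₁ⁿ + (27/5 + (12/5)√5)α₂ⁿ + (−213/20 + (11/4)√15)α₃ⁿ + (−213/20 − (11/4)√15)α₄ⁿ − 3/2. -/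
theorem stmt_11 (a b c d e : ℕ → ℝ)
    (ha1 : a 1 = 0) (hb1 : b 1 = 0) (hc1 : c 1 = 0) (hd1 : d 1 = 0) (he1 : e 1 = 0)
    (hra : ∀ n, 1 ≤ n → a (n + 1) = a n + b n + 3)
    (hrb : ∀ n, 1 ≤ n → b (n + 1) = a n + 2 * b n)
    (hrc : ∀ n, 1 ≤ n → c (n + 1) = (1/3) * a n + c n + (2/3) * d n)
    (hrd : ∀ n, 1 ≤ n → d (n + 1) = (1/2) * b n + (3/2) * c n + 2 * d n + (5/2) * e n)
    (hre : ∀ n, 1 ≤ n → e (n + 1) = 3 * c n + 4 * d n + 6 * e n)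
    :
    ∀ n, 1 ≤ n →
      d n = (27/5 - (12/5) * Real.sqrt 5) * ((3 + Real.sqrt 5)/2) ^ n
          + (27/5 + (12/5) * Real.sqrt 5) * ((3 - Real.sqrt 5)/2) ^ n
          + (-213/20 + (11/4) * Real.sqrt 15) * (4 + Real.sqrt 15) ^ n
          + (-213/20 - (11/4) * Real.sqrt 15) * (4 - Real.sqrt 15) ^ n - 3/2 := by
  have h5 : Real.sqrt 5 ^ 2 = 5 := Real.sq_sqrt (by norm_num)
  have h15 : Real.sqrt 15 ^ 2 = 15 := Real.sq_sqrt (by norm_num)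
  set s := Real.sqrt 5 with hs
  set t := Real.sqrt 15 with ht
  have key : ∀ n, 1 ≤ n →
      (a n = (-9/2 + (21/10) * s) * ((3 + s)/2) ^ n
           + (-9/2 - (21/10) * s) * ((3 - s)/2) ^ n + 3)
    ∧ (b n = (3 - (6/5) * s) * ((3 + s)/2) ^ n
           + (3 + (6/5) * s) * ((3 - s)/2) ^ n - 3)
    ∧ (c n = (-33/10 + (3/2) * s) * ((3 + s)/2) ^ n
           + (-33/10 - (3/2) * s) * ((3 - s)/2) ^ n
           + (122/15 - (21/10) * t) * (4 + t) ^ n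
           + (122/15 + (21/10) * t) * (4 - t) ^ n + 1/3)
    ∧ (d n = (27/5 - (12/5) * s) * ((3 + s)/2) ^ n
           + (27/5 + (12/5) * s) * ((3 - s)/2) ^ n
           + (-213/20 + (11/4) * t) * (4 + t) ^ n
           + (-213/20 - (11/4) * t) * (4 - t) ^ n - 3/2)
    ∧ (e n = (-21/10 + (9/10) * s) * ((3 + s)/2) ^ n
           + (-21/10 - (9/10) * s) * ((3 - s)/2) ^ n
           + (31/10 - (4/5) * t) * (4 + t) ^ n
           + (31/10 + (4/5) * t) * (4 - t) ^ n + 1) := by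
    intro n hn
    induction n, hn using Nat.le_induction with
    | base =>
      refine ⟨?_, ?_, ?_, ?_, ?_⟩ <;> simp only [pow_one, ha1, hb1, hc1, hd1, he1]
      · linear_combination (-21/10 : ℝ) * h5
      · linear_combination (6/5 : ℝ) * h5
      · linear_combination (-3/2 : ℝ) * h5 + (21/5 : ℝ) * h15
      · linear_combination (12/5 : ℝ) * h5 + (-11/2 : ℝ) * h15
      · linear_combination (-9/10 : ℝ) * h5 + (8/5 : ℝ) * h15
    | succ n hn ih =>
      obtain ⟨iha, ihb, ihc, ihd, ihe⟩ := ih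
      refine ⟨?_, ?_, ?_, ?_, ?_⟩ <;>
        simp only [pow_succ]
      · rw [hra n hn, iha, ihb]
        linear_combination ((-21/20 : ℝ) * ((3 - s)/2) ^ n + (-21/20 : ℝ) * ((3 + s)/2) ^ n) * h5
      · rw [hrb n hn, iha, ihb]
        linear_combination ((3/5 : ℝ) * ((3 - s)/2) ^ n + (3/5 : ℝ) * ((3 + s)/2) ^ n) * h5
      · rw [hrc n hn, iha, ihc, ihd]
        linear_combination ((-3/4 : ℝ) * ((3 - s)/2) ^ n + (-3/4 : ℝ) * ((3 + s)/2) ^ n) * h5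
          + ((21/10 : ℝ) * (4 - t) ^ n + (21/10 : ℝ) * (4 + t) ^ n) * h15
      · rw [hrd n hn, ihb, ihc, ihd, ihe]
        linear_combination ((6/5 : ℝ) * ((3 - s)/2) ^ n + (6/5 : ℝ) * ((3 + s)/2) ^ n) * h5
          + ((-11/4 : ℝ) * (4 - t) ^ n + (-11/4 : ℝ) * (4 + t) ^ n) * h15
      · rw [hre n hn, ihc, ihd, ihe]
        linear_combination ((-9/20 : ℝ) * ((3 - s)/2) ^ n + (-9/20 : ℝ) * ((3 + s)/2) ^ n) * h5
          + ((4/5 : ℝ) * (4 - t) ^ n + (4/5 : ℝ) * (4 + t) ^ n) * h15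
  intro n hn
  exact (key n hn).2.2.2.1
end

section
/- The matrix M = [[1,1,0,0,0,1],[1,2,0,0,0,0],[1/3,0,1,2/3,0,0],[0,1/2,3/2,2,5/2,0],[0,0,3,4,6,0],[0,0,0,0,0,1]] over ℝ satisfies M⁵ = 12M⁴ − 37M³ + 37M² − 12M + I, i.e. x⁵ − 12x⁴ + 37x³ − 37x² + 12x − 1 annihilates M. -/
section Aux

variable {α : Type*} (a b c d e f : α)

lemma v6_0 : ![a,b,c,d,e,f] 0 = a := rfl
lemma v6_1 : ![a,b,c,d,e,f] 1 = b := rfl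
lemma v6_2 : ![a,b,c,d,e,f] 2 = c := rfl
lemma v6_3 : ![a,b,c,d,e,f] 3 = d := rfl
lemma v6_4 : ![a,b,c,d,e,f] 4 = e := rfl
lemma v6_5 : ![a,b,c,d,e,f] 5 = f := rfl
lemma w6_0 (h : 0 < 6) : ![a,b,c,d,e,f] ⟨0,h⟩ = a := rfl
lemma w6_1 (h : 1 < 6) : ![a,b,c,d,e,f] ⟨1,h⟩ = b := rfl
lemma w6_2 (h : 2 < 6) : ![a,b,c,d,e,f] ⟨2,h⟩ = c := rfl
lemma w6_3 (h : 3 < 6) : ![a,b,c,d,e,f] ⟨3,h⟩ = d := rfl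
lemma w6_4 (h : 4 < 6) : ![a,b,c,d,e,f] ⟨4,h⟩ = e := rfl
lemma w6_5 (h : 5 < 6) : ![a,b,c,d,e,f] ⟨5,h⟩ = f := rfl

end Aux

theorem stmt_12 :
    let M : Matrix (Fin 6) (Fin 6) ℝ :=
      !![1, 1, 0, 0, 0, 1;
         1, 2, 0, 0, 0, 0;
         1/3, 0, 1, 2/3, 0, 0;
         0, 1/2, 3/2, 2, 5/2, 0;
         0, 0, 3, 4, 6, 0;
         0, 0, 0, 0, 0, 1]
    M ^ 5 = 12 • M ^ 4 - 37 • M ^ 3 + 37 • M ^ 2 - 12 • M + 1 := by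
  intro M
  have h2 : M * M = !![2, 3, 0, 0, 0, 2;
    3, 5, 0, 0, 0, 1;
    2/3, 2/3, 2, 2, 5/3, 1/3;
    1, 2, 12, 15, 20, 0;
    1, 2, 27, 34, 46, 0;
    0, 0, 0, 0, 0, 1] := by
    ext i j
    fin_cases i <;> fin_cases j <;>
      · simp only [M, Matrix.mul_apply, Fin.sum_univ_six, Matrix.of_apply,
          v6_0, v6_1, v6_2, v6_3, v6_4, v6_5, w6_0, w6_1, w6_2, w6_3, w6_4, w6_5]
        norm_num
  have h3 : M * M * M = !![5, 8, 0, 0, 0, 4;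
    8, 13, 0, 0, 0, 4;
    2, 3, 10, 12, 15, 1;
    7, 25/2, 189/2, 118, 315/2, 1;
    12, 22, 216, 270, 361, 1;
    0, 0, 0, 0, 0, 1] := by
    rw [h2]
    ext i j
    fin_cases i <;> fin_cases j <;>
      · simp only [M, Matrix.mul_apply, Fin.sum_univ_six, Matrix.of_apply,
          v6_0, v6_1, v6_2, v6_3, v6_4, v6_5, w6_0, w6_1, w6_2, w6_3, w6_4, w6_5]
        norm_num
  have h4 : M * M * M * M = !![13, 21, 0, 0, 0, 9;
    21, 34, 0, 0, 0, 12;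
    25/3, 14, 73, 272/3, 120, 3;
    51, 91, 744, 929, 1240, 8;
    106, 191, 1704, 2128, 2841, 13;
    0, 0, 0, 0, 0, 1] := by
    rw [h3]
    ext i j
    fin_cases i <;> fin_cases j <;>
      · simp only [M, Matrix.mul_apply, Fin.sum_univ_six, Matrix.of_apply,
          v6_0, v6_1, v6_2, v6_3, v6_4, v6_5, w6_0, w6_1, w6_2, w6_3, w6_4, w6_5]
        norm_num
  have h5 : M * M * M * M * M = !![34, 55, 0, 0, 0, 22;
    55, 89, 0, 0, 0, 33;
    140/3, 245/3, 569, 710, 2840/3, 34/3;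
    390, 1395/2, 11715/2, 7314, 19525/2, 59;
    865, 1552, 13419, 16756, 22366, 119;
    0, 0, 0, 0, 0, 1] := by
    rw [h4]
    ext i j
    fin_cases i <;> fin_cases j <;>
      · simp only [M, Matrix.mul_apply, Fin.sum_univ_six, Matrix.of_apply,
          v6_0, v6_1, v6_2, v6_3, v6_4, v6_5, w6_0, w6_1, w6_2, w6_3, w6_4, w6_5]
        norm_num
  have e2 : M ^ 2 = M * M := by rw [pow_two]
  have e3 : M ^ 3 = M * M * M := by rw [pow_succ, pow_two]
  have e4 : M ^ 4 = M * M * M * M := by rw [pow_succ, pow_succ, pow_two]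
  have e5 : M ^ 5 = M * M * M * M * M := by rw [pow_succ, pow_succ, pow_succ, pow_two]
  rw [e2, e3, e4, e5, h5, h4, h3, h2]
  ext i j
  fin_cases i <;> fin_cases j <;>
    · simp only [M, Matrix.add_apply, Matrix.sub_apply, Matrix.smul_apply, Matrix.one_apply,
        Matrix.of_apply,
        v6_0, v6_1, v6_2, v6_3, v6_4, v6_5, w6_0, w6_1, w6_2, w6_3, w6_4, w6_5]
      norm_num [Fin.ext_iff]
end

section
/- Let â, b̂ : ℕ → ℚ satisfy â(1)=b̂(1)=0 and for n ≥ 1: â(n+1)=2â(n)+2b̂(n)+6, b̂(n+1)=â(n)+2b̂(n). Then for all n ≥ 4, â(n) = 5â(n-1) − 6â(n-2) + 2â(n-3), and likewise b̂(n) = 5b̂(n-1) − 6b̂(n-2) + 2b̂(n-3). -/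
theorem stmt_14 (a b : ℕ → ℚ)
    (ha1 : a 1 = 0) (hb1 : b 1 = 0)
    (hra : ∀ n, 1 ≤ n → a (n + 1) = 2 * a n + 2 * b n + 6)
    (hrb : ∀ n, 1 ≤ n → b (n + 1) = a n + 2 * b n) :
    ∀ n, 4 ≤ n →
      (a n = 5 * a (n-1) - 6 * a (n-2) + 2 * a (n-3)) ∧
      (b n = 5 * b (n-1) - 6 * b (n-2) + 2 * b (n-3)) := by
  intro n hn
  obtain ⟨m, hm, rfl⟩ : ∃ m, 1 ≤ m ∧ n = m + 3 := ⟨n - 3, by omega, by omega⟩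
  have h1 : m + 3 - 1 = m + 2 := by omega
  have h2 : m + 3 - 2 = m + 1 := by omega
  have h3 : m + 3 - 3 = m := by omega
  rw [h1, h2, h3]
  have ra1 := hra m hm
  have ra2 := hra (m+1) (by omega)
  have ra3 := hra (m+2) (by omega)
  have rb1 := hrb m hm
  have rb2 := hrb (m+1) (by omega)
  have rb3 := hrb (m+2) (by omega)
  constructor <;> linarith
end

section
/- Let â, b̂ : ℕ → ℝ satisfy â(1)=b̂(1)=0 and for n ≥ 1: â(n+1)=2â(n)+2b̂(n)+6, b̂(n+1)=â(n)+2b̂(n). Then for all n ≥ 1: â(n) = ((9/2)√2 − 6)(2+√2)ⁿ + (−(9/2)√2 − 6)(2−√2)ⁿ + 6. -/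
theorem stmt_15 (a b : ℕ → ℝ)
    (ha1 : a 1 = 0) (hb1 : b 1 = 0)
    (hra : ∀ n, 1 ≤ n → a (n + 1) = 2 * a n + 2 * b n + 6)
    (hrb : ∀ n, 1 ≤ n → b (n + 1) = a n + 2 * b n) :
    ∀ n, 1 ≤ n →
      a n = ((9/2) * Real.sqrt 2 - 6) * (2 + Real.sqrt 2) ^ n
          + (-(9/2) * Real.sqrt 2 - 6) * (2 - Real.sqrt 2) ^ n + 6 := by
  have hs : Real.sqrt 2 ^ 2 = 2 := Real.sq_sqrt (by norm_num)
  set s := Real.sqrt 2 with hsdef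
  have key : ∀ n, 1 ≤ n →
      a n = ((9/2) * s - 6) * (2 + s) ^ n + (-(9/2) * s - 6) * (2 - s) ^ n + 6 ∧
      b n = (9/2 - 3 * s) * (2 + s) ^ n + (9/2 + 3 * s) * (2 - s) ^ n - 6 := by
    intro n hn
    induction n, hn using Nat.le_induction with
    | base =>
      rw [ha1, hb1]
      constructor
      · rw [pow_one, pow_one]; linear_combination (-9) * hs
      · rw [pow_one, pow_one]; linear_combination 6 * hs
    | succ n hn ih =>
      obtain ⟨iha, ihb⟩ := ih
      constructor
      · rw [hra n hn, iha, ihb, pow_succ, pow_succ]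
        linear_combination (-(9/2) * ((2 + s) ^ n + (2 - s) ^ n)) * hs
      · rw [hrb n hn, iha, ihb, pow_succ, pow_succ]
        linear_combination (3 * ((2 + s) ^ n + (2 - s) ^ n)) * hs
  exact fun n hn => (key n hn).1
end

section
/- Let â, b̂ : ℕ → ℝ satisfy â(1)=b̂(1)=0 and for n ≥ 1: â(n+1)=2â(n)+2b̂(n)+6, b̂(n+1)=â(n)+2b̂(n). Then for all n ≥ 1: b̂(n) = (9/2 − 3√2)(2+√2)ⁿ + (9/2 + 3√2)(2−√2)ⁿ − 6. -/
theorem stmt_16 (a b : ℕ → ℝ)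
    (ha1 : a 1 = 0) (hb1 : b 1 = 0)
    (hra : ∀ n, 1 ≤ n → a (n + 1) = 2 * a n + 2 * b n + 6)
    (hrb : ∀ n, 1 ≤ n → b (n + 1) = a n + 2 * b n) :
    ∀ n, 1 ≤ n →
      b n = (9/2 - 3 * Real.sqrt 2) * (2 + Real.sqrt 2) ^ n
          + (9/2 + 3 * Real.sqrt 2) * (2 - Real.sqrt 2) ^ n - 6 := by
  set s := Real.sqrt 2 with hsdef
  have hs : s ^ 2 = 2 := Real.sq_sqrt (by norm_num)
  have key : ∀ n, 1 ≤ n →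
      a n = (9/2 - 3 * s) * s * (2 + s) ^ n - (9/2 + 3 * s) * s * (2 - s) ^ n + 6 ∧
      b n = (9/2 - 3 * s) * (2 + s) ^ n + (9/2 + 3 * s) * (2 - s) ^ n - 6 := by
    intro n hn
    induction n, hn using Nat.le_induction with
    | base =>
      constructor
      · rw [ha1]; simp only [pow_one]; linear_combination 3 * hs
      · rw [hb1]; simp only [pow_one]; linear_combination 6 * hs
    | succ n hn ih =>
      obtain ⟨ihA, ihB⟩ := ih
      constructor
      · rw [hra n hn, ihA, ihB]
        linear_combination (((9/2 - 3*s) * (2+s)^n + (9/2 + 3*s) * (2-s)^n) + 6*s*((2+s)^n - (2-s)^n) - 9*((2+s)^n + (2-s)^n)) * hs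
      · rw [hrb n hn, ihA, ihB]
        ring
  exact fun n hn => (key n hn).2
end

section
/- Let â, b̂, ĉ, d̂, ê : ℕ → ℚ satisfy, for n ≥ 1: â(n+1)=2â(n)+2b̂(n)+6, b̂(n+1)=â(n)+2b̂(n), ĉ(n+1)=â(n)+3ĉ(n)+2d̂(n), d̂(n+1)=b̂(n)+3ĉ(n)+4d̂(n)+5ê(n), ê(n+1)=3ĉ(n)+4d̂(n)+6ê(n), all zero at n=1. Define ŝ(0)=1 and ŝ(n)=â(n)+b̂(n)+ĉ(n)+d̂(n)+ê(n)+3 for n ≥ 1. Then for all n ≥ 7, ŝ(n) = 18ŝ(n-1) − 99ŝ(n-2) + 226ŝ(n-3) − 224ŝ(n-4) + 92ŝ(n-5) − 12ŝ(n-6). -/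
theorem stmt_17 (a b c d e s : ℕ → ℚ)
    (ha1 : a 1 = 0) (hb1 : b 1 = 0) (hc1 : c 1 = 0) (hd1 : d 1 = 0) (he1 : e 1 = 0)
    (hra : ∀ n, 1 ≤ n → a (n + 1) = 2 * a n + 2 * b n + 6)
    (hrb : ∀ n, 1 ≤ n → b (n + 1) = a n + 2 * b n)
    (hrc : ∀ n, 1 ≤ n → c (n + 1) = a n + 3 * c n + 2 * d n)
    (hrd : ∀ n, 1 ≤ n → d (n + 1) = b n + 3 * c n + 4 * d n + 5 * e n)
    (hre : ∀ n, 1 ≤ n → e (n + 1) = 3 * c n + 4 * d n + 6 * e n)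
    (hs0 : s 0 = 1)
    (hs : ∀ n, 1 ≤ n → s n = a n + b n + c n + d n + e n + 3) :
    ∀ n, 7 ≤ n →
      s n = 18 * s (n-1) - 99 * s (n-2) + 226 * s (n-3) - 224 * s (n-4)
            + 92 * s (n-5) - 12 * s (n-6) := by
  intro n hn
  obtain ⟨m, rfl⟩ : ∃ m, n = m + 7 := ⟨n - 7, by omega⟩
  have hi1 : m + 7 - 1 = m + 6 := by omega
  have hi2 : m + 7 - 2 = m + 5 := by omega
  have hi3 : m + 7 - 3 = m + 4 := by omega
  have hi4 : m + 7 - 4 = m + 3 := by omega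
  have hi5 : m + 7 - 5 = m + 2 := by omega
  have hi6 : m + 7 - 6 = m + 1 := by omega
  rw [hi1, hi2, hi3, hi4, hi5, hi6]
  have ha1 := hra (m+1) (by omega)
  have ha2 := hra (m+2) (by omega)
  have ha3 := hra (m+3) (by omega)
  have ha4 := hra (m+4) (by omega)
  have ha5 := hra (m+5) (by omega)
  have ha6 := hra (m+6) (by omega)
  have hb1 := hrb (m+1) (by omega)
  have hb2 := hrb (m+2) (by omega)
  have hb3 := hrb (m+3) (by omega)
  have hb4 := hrb (m+4) (by omega)
  have hb5 := hrb (m+5) (by omega)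
  have hb6 := hrb (m+6) (by omega)
  have hc1 := hrc (m+1) (by omega)
  have hc2 := hrc (m+2) (by omega)
  have hc3 := hrc (m+3) (by omega)
  have hc4 := hrc (m+4) (by omega)
  have hc5 := hrc (m+5) (by omega)
  have hc6 := hrc (m+6) (by omega)
  have hd1 := hrd (m+1) (by omega)
  have hd2 := hrd (m+2) (by omega)
  have hd3 := hrd (m+3) (by omega)
  have hd4 := hrd (m+4) (by omega)
  have hd5 := hrd (m+5) (by omega)
  have hd6 := hrd (m+6) (by omega)
  have he1 := hre (m+1) (by omega)
  have he2 := hre (m+2) (by omega)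
  have he3 := hre (m+3) (by omega)
  have he4 := hre (m+4) (by omega)
  have he5 := hre (m+5) (by omega)
  have he6 := hre (m+6) (by omega)
  have hs1 := hs (m+1) (by omega)
  have hs2 := hs (m+2) (by omega)
  have hs3 := hs (m+3) (by omega)
  have hs4 := hs (m+4) (by omega)
  have hs5 := hs (m+5) (by omega)
  have hs6 := hs (m+6) (by omega)
  have hs7 := hs (m+7) (by omega)
  simp only [show ∀ k:ℕ, m+k+1 = m+(k+1) from fun k => by omega] at *
  linarith
end

section
/- The matrix M̂ = [[2,2,0,0,0,2],[1,2,0,0,0,0],[1,0,3,2,0,0],[0,1,3,4,5,0],[0,0,3,4,6,0],[0,0,0,0,0,1]] over ℚ has characteristic polynomial (x−1)(x²−4x+2)(x³−13x²+28x−6) = x⁶ − 18x⁵ + 99x⁴ − 226x³ + 224x² − 92x + 12. -/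
/-!
Grouping the basis as (e₁, e₂ | e₃, e₄, e₅ | e₆) makes M̂ block triangular: the last row
is e₆ and the first two rows vanish on e₃, e₄, e₅. So χ(M̂) is the product of the
characteristic polynomials of the diagonal blocks: X - 1, that of [[2,2],[1,2]] and that of
[[3,2,0],[3,4,5],[3,4,6]], each read off from trace, principal minors and determinant.
-/

open Polynomial Matrix

theorem Matrix.charpoly_fin_three {R : Type*} [CommRing R] (M : Matrix (Fin 3) (Fin 3) R) :
    M.charpoly = X ^ 3 - C M.trace * X ^ 2
      + C (M 0 0 * M 1 1 - M 0 1 * M 1 0 + M 0 0 * M 2 2 - M 0 2 * M 2 0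
        + M 1 1 * M 2 2 - M 1 2 * M 2 1) * X - C M.det := by
  simp only [charpoly, det_fin_three, trace_fin_three, charmatrix_apply, diagonal_apply,
    Fin.isValue, Fin.reduceEq, if_true, if_false, map_add, map_sub, map_mul]
  ring

theorem stmt_18 :
    let M : Matrix (Fin 6) (Fin 6) ℚ :=
      !![2, 2, 0, 0, 0, 2;
         1, 2, 0, 0, 0, 0;
         1, 0, 3, 2, 0, 0;
         0, 1, 3, 4, 5, 0;
         0, 0, 3, 4, 6, 0;
         0, 0, 0, 0, 0, 1]
    M.charpoly =
      (Polynomial.X - 1) * (Polynomial.X ^ 2 - 4 * Polynomial.X + 2) *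
        (Polynomial.X ^ 3 - 13 * Polynomial.X ^ 2 + 28 * Polynomial.X - 6) ∧
    M.charpoly =
      Polynomial.X ^ 6 - 18 * Polynomial.X ^ 5 + 99 * Polynomial.X ^ 4
        - 226 * Polynomial.X ^ 3 + 224 * Polynomial.X ^ 2 - 92 * Polynomial.X + 12 := by
  intro M
  set A : Matrix (Fin 2) (Fin 2) ℚ := !![2, 2; 1, 2]
  set B : Matrix (Fin 3) (Fin 3) ℚ := !![3, 2, 0; 3, 4, 5; 3, 4, 6]
  have hblocks : M = reindex finSumFinEquiv finSumFinEquiv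
      (fromBlocks (reindex finSumFinEquiv finSumFinEquiv (fromBlocks A 0 !![1, 0; 0, 1; 0, 0] B))
        !![2; 0; 0; 0; 0] 0 (1 : Matrix (Fin 1) (Fin 1) ℚ)) := by
    ext i j
    fin_cases i <;> fin_cases j <;> rfl
  have hA : A.charpoly = X ^ 2 - 4 * X + 2 := by
    rw [charpoly_fin_two]
    norm_num [A, trace_fin_two, det_fin_two_of, map_ofNat]
  have hB : B.charpoly = X ^ 3 - 13 * X ^ 2 + 28 * X - 6 := by
    rw [charpoly_fin_three]
    simp only [B, trace_fin_three, det_fin_three, of_apply, cons_val', cons_val_zero,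
      cons_val_one, cons_val_two, empty_val', cons_val_fin_one]
    norm_num [map_ofNat]
  have hfactor :
      M.charpoly = (X - 1) * (X ^ 2 - 4 * X + 2) * (X ^ 3 - 13 * X ^ 2 + 28 * X - 6) := by
    rw [hblocks, charpoly_reindex, charpoly_fromBlocks_zero₂₁, charpoly_reindex,
      charpoly_fromBlocks_zero₁₂, hA, hB, charpoly_one, Fintype.card_fin, pow_one]
    ring
  exact ⟨hfactor, hfactor.trans (by ring)⟩
end
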